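/- arXiv:2409.06544 — 7 statements merged into one kernel-verified Lean document; each statement's English description precedes it below -/
import Mathlib

section
/- For every nonnegative integer n, ∑_{k=0}^n binomial(n,k)·(-1)^k·(binomial(2k,k)/4^k)·D_k = (binomial(2n,n)/4^n)·D_n, where D_k is the sequence of rational numbers defined below. -/
/-!
Work in `ℚ[X]` with `x = X - 1/2`. Chu–Vandermonde in the binomial ring `ℚ[X]` gives
`choose (x + n) n = ∑ₖ choose n k * choose x k`, and the identity is the comparison of the
coefficients of `X²`. Since `k! * choose x k = ∏_{i<k} (X - (i + 1/2))`, factoring out the constant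
terms gives `choose x k = (-1)^k C(2k,k)/4^k * ∏_{i<k} (1 + bᵢ X)` with `bᵢ = -1/(i + 1/2)`, and
likewise `choose (x + n) n = C(2n,n)/4^n * ∏_{i<n} (1 - bᵢ X)`. The `X²`-coefficient of such a
product is `((∑ bᵢ)² - ∑ bᵢ²)/2 = 2 D_k`.
-/

/-- `D_n = (∑_{i=1}^n 1/(2i-1))² - ∑_{i=1}^n 1/(2i-1)²` (so `D_0 = 0`). -/
def D (n : ℕ) : ℚ :=
  (∑ i ∈ Finset.Icc 1 n, (1 : ℚ) / (2 * i - 1)) ^ 2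
    - ∑ i ∈ Finset.Icc 1 n, (1 : ℚ) / (2 * i - 1) ^ 2

open Finset Polynomial Nat

section
variable {R : Type*} [CommRing R] {ι : Type*} [DecidableEq ι]

theorem coeff_one_prod_one_add_C_mul_X (s : Finset ι) (b : ι → R) :
    (∏ i ∈ s, (1 + C (b i) * X)).coeff 1 = ∑ i ∈ s, b i := by
  induction s using Finset.induction_on with
  | empty => simp [coeff_one]
  | insert j s hj ih =>
    rw [prod_insert hj, sum_insert hj, add_mul, one_mul, mul_assoc, coeff_add, coeff_C_mul,
      coeff_X_mul, ih, coeff_zero_eq_eval_zero, add_comm]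
    simp [eval_prod]

theorem two_mul_coeff_two_prod_one_add_C_mul_X (s : Finset ι) (b : ι → R) :
    2 * (∏ i ∈ s, (1 + C (b i) * X)).coeff 2 = (∑ i ∈ s, b i) ^ 2 - ∑ i ∈ s, b i ^ 2 := by
  induction s using Finset.induction_on with
  | empty => simp [coeff_one]
  | insert j s hj ih =>
    rw [prod_insert hj, sum_insert hj, sum_insert hj, add_mul, one_mul, mul_assoc, coeff_add,
      coeff_C_mul, coeff_X_mul, coeff_one_prod_one_add_C_mul_X, mul_add, ih]
    ring

end

section
variable {K : Type*} [Field K] {ι : Type*}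

theorem prod_X_add_C_eq_C_prod_mul (s : Finset ι) (a : ι → K) (ha : ∀ i ∈ s, a i ≠ 0) :
    ∏ i ∈ s, (X + C (a i)) = C (∏ i ∈ s, a i) * ∏ i ∈ s, (1 + C (a i)⁻¹ * X) := by
  rw [map_prod, ← prod_mul_distrib]
  refine prod_congr rfl fun i hi => ?_
  rw [mul_add, mul_one, ← mul_assoc, ← C_mul, mul_inv_cancel₀ (ha i hi), C_1, one_mul, add_comm]

theorem two_mul_coeff_two_prod_X_add_C [DecidableEq ι] (s : Finset ι) (a : ι → K)
    (ha : ∀ i ∈ s, a i ≠ 0) :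
    2 * (∏ i ∈ s, (X + C (a i))).coeff 2
      = (∏ i ∈ s, a i) * ((∑ i ∈ s, (a i)⁻¹) ^ 2 - ∑ i ∈ s, (a i)⁻¹ ^ 2) := by
  rw [prod_X_add_C_eq_C_prod_mul s a ha, coeff_C_mul, mul_left_comm,
    two_mul_coeff_two_prod_one_add_C_mul_X]

end

theorem factorial_mul_choose_eq_prod_range {A : Type*} [CommRing A] [BinomialRing A]
    (r : A) (k : ℕ) : (k ! : A) * Ring.choose r k = ∏ i ∈ range k, (r - i) := by
  rw [← nsmul_eq_mul, ← Ring.descPochhammer_eq_factorial_smul_choose, ← aeval_eq_smeval,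
    aeval_def, eval₂_eq_eval_map, descPochhammer_map, descPochhammer_eval_eq_prod_range]

theorem prod_range_add_half (k : ℕ) :
    ∏ i ∈ range k, ((i : ℚ) + 1 / 2) = k ! * k.centralBinom / 4 ^ k := by
  induction k with
  | zero => simp
  | succ k ih =>
    have h : ((k : ℚ) + 1) * (k + 1).centralBinom = 2 * (2 * k + 1) * k.centralBinom := by
      exact_mod_cast succ_mul_centralBinom_succ k
    rw [prod_range_succ, ih, factorial_succ]
    push_cast
    linear_combination (-(k ! : ℚ) / 4 ^ (k + 1)) * h

theorem four_mul_D (k : ℕ) :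
    4 * D k
      = (∑ i ∈ range k, ((i : ℚ) + 1 / 2)⁻¹) ^ 2 - ∑ i ∈ range k, ((i : ℚ) + 1 / 2)⁻¹ ^ 2 := by
  have reindex (f : ℕ → ℚ) : ∑ i ∈ Icc 1 k, f i = ∑ i ∈ range k, f (i + 1) := by
    rw [range_eq_Ico, sum_Ico_add' f 0 k 1, ← Ico_add_one_right_eq_Icc]
  have hsum : ∑ i ∈ range k, ((i : ℚ) + 1 / 2)⁻¹
      = 2 * ∑ i ∈ Icc 1 k, (1 : ℚ) / (2 * i - 1) := by
    rw [reindex, mul_sum]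
    refine sum_congr rfl fun i _ => ?_
    rw [cast_add_one, show 2 * ((i : ℚ) + 1) - 1 = 2 * (i + 1 / 2) by ring]
    field_simp
  have hsq : ∑ i ∈ range k, ((i : ℚ) + 1 / 2)⁻¹ ^ 2
      = 4 * ∑ i ∈ Icc 1 k, (1 : ℚ) / (2 * i - 1) ^ 2 := by
    rw [reindex, mul_sum]
    refine sum_congr rfl fun i _ => ?_
    rw [cast_add_one, show 2 * ((i : ℚ) + 1) - 1 = 2 * (i + 1 / 2) by ring]
    field_simp
    ring
  rw [hsum, hsq, D]
  ring

theorem two_mul_coeff_two_prod_range_X_add_C (σ : ℚ) (hσ : σ ^ 2 = 1) (k : ℕ) :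
    2 * (∏ i ∈ range k, (X + C (σ * ((i : ℚ) + 1 / 2)))).coeff 2
      = σ ^ k * (k ! * k.centralBinom / 4 ^ k) * (4 * D k) := by
  have hσ0 : σ ≠ 0 := by rintro rfl; norm_num at hσ
  rw [two_mul_coeff_two_prod_X_add_C _ _ fun i _ => mul_ne_zero hσ0 (by positivity),
    prod_mul_distrib, prod_const, card_range, prod_range_add_half, four_mul_D]
  simp only [mul_inv, ← mul_sum, mul_pow, inv_pow, hσ, inv_one, one_mul]

theorem coeff_two_choose_X_sub_half (k : ℕ) :
    (Ring.choose (X - C (1 / 2 : ℚ)) k).coeff 2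
      = 2 * ((-1) ^ k * (k.centralBinom / 4 ^ k) * D k) := by
  have hfact := congrArg (fun p : ℚ[X] => p.coeff 2)
    (factorial_mul_choose_eq_prod_range (X - C (1 / 2 : ℚ)) k)
  have factor (i : ℕ) : X - C (1 / 2) - (i : ℚ[X]) = X + C (-1 * ((i : ℚ) + 1 / 2)) := by
    simp only [map_mul, map_neg, map_add, map_natCast, C_1]; ring
  simp only [factor, coeff_natCast_mul] at hfact
  have hprod := two_mul_coeff_two_prod_range_X_add_C (-1) (by norm_num) k
  refine mul_left_cancel₀ (mod_cast k.factorial_ne_zero : (k ! : ℚ) ≠ 0) ?_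
  rw [hfact]
  linear_combination hprod / 2

theorem coeff_two_choose_X_sub_half_add_self (n : ℕ) :
    (Ring.choose (X - C (1 / 2 : ℚ) + (n : ℚ[X])) n).coeff 2
      = 2 * (n.centralBinom / 4 ^ n * D n) := by
  have hfact := congrArg (fun p : ℚ[X] => p.coeff 2)
    (factorial_mul_choose_eq_prod_range (X - C (1 / 2 : ℚ) + (n : ℚ[X])) n)
  have reflect : ∏ i ∈ range n, (X - C (1 / 2 : ℚ) + (n : ℚ[X]) - (i : ℚ[X]))
      = ∏ i ∈ range n, (X + C (1 * ((i : ℚ) + 1 / 2))) := by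
    rw [← prod_range_reflect]
    refine prod_congr rfl fun i hi => ?_
    have hin := mem_range.mp hi
    have half : (1 : ℚ[X]) = C (1 / 2) + C (1 / 2) := by rw [← C_add]; norm_num
    rw [Nat.cast_sub (by omega), Nat.cast_sub (by omega)]
    simp only [map_mul, map_add, map_natCast, C_1]
    linear_combination half
  simp only [reflect, coeff_natCast_mul] at hfact
  have hprod := two_mul_coeff_two_prod_range_X_add_C 1 (by norm_num) n
  refine mul_left_cancel₀ (mod_cast n.factorial_ne_zero : (n ! : ℚ) ≠ 0) ?_
  rw [hfact]
  linear_combination hprod / 2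

theorem choose_X_sub_half_add_self_eq_sum (n : ℕ) :
    Ring.choose (X - C (1 / 2 : ℚ) + (n : ℚ[X])) n
      = ∑ k ∈ range (n + 1), (n.choose k : ℚ[X]) * Ring.choose (X - C (1 / 2)) k := by
  rw [Ring.add_choose_eq n (Commute.all _ _), Nat.sum_antidiagonal_eq_sum_range_succ_mk]
  refine sum_congr rfl fun k hk => ?_
  rw [Ring.choose_natCast, Nat.choose_symm (Nat.lt_succ_iff.mp (mem_range.mp hk)), mul_comm]

theorem binom_transform_D (n : ℕ) :
    ∑ k ∈ Finset.range (n + 1),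
        (n.choose k : ℚ) * (-1) ^ k * (((2 * k).choose k : ℚ) / 4 ^ k) * D k
      = ((2 * n).choose n : ℚ) / 4 ^ n * D n := by
  have h := congrArg (fun p : ℚ[X] => p.coeff 2) (choose_X_sub_half_add_self_eq_sum n)
  simp only [finsetSum_coeff, coeff_natCast_mul, coeff_two_choose_X_sub_half,
    coeff_two_choose_X_sub_half_add_self] at h
  simp only [← centralBinom_eq_two_mul_choose]
  rw [← mul_right_inj' (two_ne_zero' ℚ), h, mul_sum]
  exact sum_congr rfl fun k _ => by ring
end

section
/- Let (a_n)_{n≥0} be a sequence of rational numbers satisfying ∑_{k=0}^n binomial(n,k)·(-1)^k·a_k = a_n for every nonnegative integer n. Then for every odd positive integer n, ∑_{k=0}^n binomial(n,k)·binomial(n+k,k)·(-1)^k·a_k = 0. -/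
/-!
Write `v k = C(n,k) C(n+k,k) (-1)^k`. The hypothesis says that `a` is fixed by the binomial
transform `T = (C(k,j) (-1)^j)`, and `v` is a left eigenvector of `T` with eigenvalue `(-1)^n`:
after `C(n,k) C(k,j) = C(n,j) C(n-j,k-j)`, the sum `∑ₖ v k C(k,j)` is an `(n-j)`-th forward
difference of `x ↦ C(x,n)`, namely `(-1)^n C(n,j) C(n+j,j)`. Hence
`v ⬝ a = v ⬝ T a = (-1)^n v ⬝ a`, which vanishes for odd `n`.
-/

open Finset

theorem sum_range_neg_one_pow_mul_choose_mul_choose_add (m j r : ℕ) :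
    ∑ i ∈ range (m + 1), (-1 : ℤ) ^ i * m.choose i * (r + i).choose (m + j) =
      (-1) ^ m * r.choose j := by
  rw [← congrFun (fwdDiff_iter_choose j m) r, fwdDiff_iter_eq_sum_shift, mul_sum]
  refine sum_congr rfl fun i hi => ?_
  have hsign : m + (m - i) = i + 2 * (m - i) := by
    have := mem_range.mp hi
    omega
  rw [smul_eq_mul, smul_eq_mul, mul_one, ← mul_assoc, ← mul_assoc, ← pow_add, hsign, pow_add,
    pow_mul, neg_one_sq, one_pow, mul_one]

theorem sum_range_neg_one_pow_mul_choose_mul_add_choose_mul_choose (m j : ℕ) :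
    ∑ k ∈ range (j + m + 1),
        (-1 : ℤ) ^ k * (j + m).choose k * (j + m + k).choose k * k.choose j =
      (-1) ^ (j + m) * (j + m).choose j * (j + m + j).choose j := by
  rw [← sum_range_add_sum_Ico _ (by omega : j ≤ j + m + 1),
    sum_eq_zero fun k hk => by simp [Nat.choose_eq_zero_of_lt (mem_range.mp hk)], zero_add,
    sum_Ico_eq_sum_range, show j + m + 1 - j = m + 1 by omega]
  have hterm : ∀ i ∈ range (m + 1),
      (-1 : ℤ) ^ (j + i) * (j + m).choose (j + i) * (j + m + (j + i)).choose (j + i) *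
          (j + i).choose j =
        (-1) ^ j * (j + m).choose j *
          ((-1) ^ i * m.choose i * (j + m + j + i).choose (m + j)) := by
    intro i hi
    have hsplit :
        ((j + m).choose (j + i) : ℤ) * (j + i).choose j = (j + m).choose j * m.choose i := by
      have := Nat.choose_mul (n := j + m) (k := j + i) (s := j) (by have := mem_range.mp hi; omega)
      rw [add_tsub_cancel_left, add_tsub_cancel_left] at this
      exact_mod_cast this
    rw [Nat.choose_symm_of_eq_add (by omega : j + m + (j + i) = (j + i) + (m + j)),
      show j + m + (j + i) = j + m + j + i by omega]
    linear_combination (-1 : ℤ) ^ j * (-1) ^ i * ((j + m + j + i).choose (m + j) : ℤ) * hsplit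
  rw [sum_congr rfl hterm, ← mul_sum, sum_range_neg_one_pow_mul_choose_mul_choose_add]
  ring

section BinomialSelfInverse

variable {R : Type*} [CommRing R] {a : ℕ → R}

theorem sum_range_mul_eq_sum_range_sum_mul_choose
    (ha : ∀ n : ℕ, ∑ k ∈ range (n + 1), (n.choose k : R) * (-1) ^ k * a k = a n)
    (w : ℕ → R) (n : ℕ) :
    ∑ k ∈ range (n + 1), w k * a k =
      ∑ j ∈ range (n + 1), (∑ k ∈ range (n + 1), w k * k.choose j) * ((-1) ^ j * a j) := by
  have hexpand : ∀ k ∈ range (n + 1),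
      a k = ∑ j ∈ range (n + 1), (k.choose j : R) * (-1) ^ j * a j := by
    intro k hk
    rw [← ha k]
    refine sum_subset (range_subset_range.mpr (mem_range.mp hk)) fun j _ hjk => ?_
    rw [Nat.choose_eq_zero_of_lt (by simp at hjk; omega), Nat.cast_zero, zero_mul, zero_mul]
  calc ∑ k ∈ range (n + 1), w k * a k
      = ∑ k ∈ range (n + 1), ∑ j ∈ range (n + 1), w k * k.choose j * ((-1) ^ j * a j) :=
        sum_congr rfl fun k hk => by simp_rw [hexpand k hk, mul_sum, mul_assoc]
    _ = _ := by rw [sum_comm]; simp_rw [sum_mul]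

theorem sum_range_choose_mul_add_choose_mul_eq_neg_one_pow_mul
    (ha : ∀ n : ℕ, ∑ k ∈ range (n + 1), (n.choose k : R) * (-1) ^ k * a k = a n) (n : ℕ) :
    ∑ k ∈ range (n + 1), (n.choose k : R) * ((n + k).choose k : R) * (-1) ^ k * a k =
      (-1) ^ n *
        ∑ k ∈ range (n + 1), (n.choose k : R) * ((n + k).choose k : R) * (-1) ^ k * a k := by
  set w : ℕ → R := fun k => (n.choose k : R) * ((n + k).choose k : R) * (-1) ^ k
  have hw : ∀ j ∈ range (n + 1),
      ∑ k ∈ range (n + 1), w k * k.choose j = (-1) ^ n * n.choose j * (n + j).choose j := by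
    intro j hj
    obtain ⟨m, rfl⟩ := Nat.exists_eq_add_of_le (Nat.lt_succ_iff.mp (mem_range.mp hj))
    have := congrArg (Int.cast : ℤ → R)
      (sum_range_neg_one_pow_mul_choose_mul_add_choose_mul_choose m j)
    push_cast at this
    rw [← this]
    exact sum_congr rfl fun k _ => by ring
  change ∑ k ∈ range (n + 1), w k * a k = (-1) ^ n * ∑ k ∈ range (n + 1), w k * a k
  conv_lhs => rw [sum_range_mul_eq_sum_range_sum_mul_choose ha]
  rw [mul_sum]
  refine sum_congr rfl fun j hj => ?_
  rw [hw j hj]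
  ring

end BinomialSelfInverse

theorem odd_vanishing_of_binom_self_inverse (a : ℕ → ℚ)
    (ha : ∀ n : ℕ, ∑ k ∈ Finset.range (n + 1), (n.choose k : ℚ) * (-1) ^ k * a k = a n)
    (n : ℕ) (hn : Odd n) :
    ∑ k ∈ Finset.range (n + 1),
        (n.choose k : ℚ) * ((n + k).choose k : ℚ) * (-1) ^ k * a k = 0 := by
  have h := sum_range_choose_mul_add_choose_mul_eq_neg_one_pow_mul ha n
  rw [hn.neg_one_pow] at h
  linarith
end

section
/- Let p be an odd prime. Then A'_{(p-1)/2} ≡ 1 + ∑_{k=1}^{(p-1)/2} (binomial(2k,k)³/64^k)·(1 - p·∑_{i=1}^k 1/(2i-1) + (p²/2)·((∑_{i=1}^k 1/(2i-1))² - 3·∑_{i=1}^k 1/(2i-1)²)) (mod p³). -/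
/-- The Apéry numbers `A'_n = ∑_{k=0}^n C(n,k)^2 C(n+k,k)`. -/
def apery (n : ℕ) : ℕ := ∑ k ∈ Finset.range (n + 1), n.choose k ^ 2 * (n + k).choose k

/-- `a ≡ b (mod p^r)` for rationals: `a - b` is `p^r` times a rational whose
denominator (in lowest terms) is not divisible by `p`. -/
def pcong (p r : ℕ) (a b : ℚ) : Prop :=
  ∃ q : ℚ, a - b = (p : ℚ) ^ r * q ∧ ¬ (p ∣ q.den)

/-!
Write `p = 2n + 1` and `x_m = p / (2m - 1)`. Each summand of `A'_n` factors exactly as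
`C(n,k)² C(n+k,k) = C(2k,k)³ / 64^k · ∏_{m ≤ k} (1 - x_m)(1 - x_m²)`, a rational identity.
For `m ≤ n` every `x_m` has `p`-adic norm `1/p`, and a product `∏ (1 - x)(1 - x²)` of factors with
`‖x‖ ≤ ε ≤ 1` agrees with its second-order expansion `1 - Σx + ((Σx)² - 3Σx²)/2` up to `ε³`
(ultrametric induction on the number of factors). Since `C(2k,k)³ / 64^k` is a `p`-adic integer
for odd `p`, the ultrametric inequality bounds the whole difference by `p⁻³`.
-/

open Finset

namespace IsUltrametricDist

variable {E : Type*} [SeminormedAddGroup E] [IsUltrametricDist E]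

lemma norm_add_le_of_le {a b : E} {C : ℝ} (ha : ‖a‖ ≤ C) (hb : ‖b‖ ≤ C) : ‖a + b‖ ≤ C :=
  (norm_add_le_max a b).trans (max_le ha hb)

lemma norm_sub_le_of_le {a b : E} {C : ℝ} (ha : ‖a‖ ≤ C) (hb : ‖b‖ ≤ C) : ‖a - b‖ ≤ C := by
  rw [sub_eq_add_neg]
  exact norm_add_le_of_le ha (by rwa [norm_neg])

lemma norm_one_sub_le_one {R : Type*} [SeminormedRing R] [NormOneClass R] [IsUltrametricDist R]
    {a : R} (ha : ‖a‖ ≤ 1) : ‖1 - a‖ ≤ 1 :=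
  norm_sub_le_of_le norm_one.le ha

end IsUltrametricDist

section Ultrametric

open IsUltrametricDist

variable {K : Type*} [NormedField K] [IsUltrametricDist K]

theorem norm_prod_one_sub_mul_one_sub_sq_sub_le {ι : Type*} (s : Finset ι) (x : ι → K) {ε : ℝ}
    (hε0 : 0 ≤ ε) (hε1 : ε ≤ 1) (h2 : ‖(2 : K)‖ = 1) (hx : ∀ i ∈ s, ‖x i‖ ≤ ε) :
    ‖∏ i ∈ s, (1 - x i) * (1 - x i ^ 2)
      - (1 - ∑ i ∈ s, x i + ((∑ i ∈ s, x i) ^ 2 - 3 * ∑ i ∈ s, x i ^ 2) / 2)‖ ≤ ε ^ 3 := by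
  have h2ne : (2 : K) ≠ 0 := norm_ne_zero_iff.mp (by rw [h2]; exact one_ne_zero)
  induction s using Finset.cons_induction with
  | empty => simp; positivity
  | cons a s ha ih =>
    rw [forall_mem_cons] at hx
    rw [prod_cons, sum_cons, sum_cons]
    set y := x a
    set S := ∑ i ∈ s, x i
    set Q := ∑ i ∈ s, x i ^ 2
    set R := (S ^ 2 - 3 * Q) / 2
    have hy : ‖y‖ ≤ ε := hx.1
    have hy2 : ‖y ^ 2‖ ≤ ε ^ 2 := by rw [norm_pow]; gcongr
    have hy3 : ‖y ^ 3‖ ≤ ε ^ 3 := by rw [norm_pow]; gcongr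
    have hS : ‖S‖ ≤ ε := norm_sum_le_of_forall_le_of_nonneg hε0 hx.2
    have hQ : ‖Q‖ ≤ ε ^ 2 := norm_sum_le_of_forall_le_of_nonneg (by positivity)
      fun i hi => by rw [norm_pow]; gcongr; exact hx.2 i hi
    have hR : ‖R‖ ≤ ε ^ 2 := by
      have h3 : ‖(3 : K)‖ ≤ 1 := by exact_mod_cast norm_natCast_le_one K 3
      rw [norm_div, h2, div_one]
      refine IsUltrametricDist.norm_sub_le_of_le (by rw [norm_pow]; gcongr) ?_
      simpa using norm_mul_le_of_le h3 hQ
    have hT : ‖1 - S + R‖ ≤ 1 :=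
      norm_add_le_of_le (norm_one_sub_le_one (hS.trans hε1)) (hR.trans (pow_le_one₀ hε0 hε1))
    have hg : ‖(1 - y) * (1 - y ^ 2)‖ ≤ 1 := by
      simpa using norm_mul_le_of_le (norm_one_sub_le_one (hy.trans hε1))
        (norm_one_sub_le_one (hy2.trans (pow_le_one₀ hε0 hε1)))
    have hE : ‖S * y ^ 2 - (y + y ^ 2) * R + y ^ 3 * (1 - S + R)‖ ≤ ε ^ 3 := by
      have hyy : ‖y + y ^ 2‖ ≤ ε :=
        norm_add_le_of_le hy (hy2.trans (pow_le_of_le_one hε0 hε1 two_ne_zero))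
      refine norm_add_le_of_le (IsUltrametricDist.norm_sub_le_of_le ?_ ?_) ?_
      · simpa [pow_succ'] using norm_mul_le_of_le hS hy2
      · simpa [pow_succ'] using norm_mul_le_of_le hyy hR
      · simpa using norm_mul_le_of_le hy3 hT
    -- peeling off one factor leaves the old error times a factor of norm `≤ 1`, plus terms of
    -- order `ε³`
    calc _ = ‖(1 - y) * (1 - y ^ 2) * (∏ i ∈ s, (1 - x i) * (1 - x i ^ 2) - (1 - S + R))
          + (S * y ^ 2 - (y + y ^ 2) * R + y ^ 3 * (1 - S + R))‖ := by
          congr 1; simp only [R]; field_simp; ring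
      _ ≤ ε ^ 3 := norm_add_le_of_le (by simpa using norm_mul_le_of_le hg (ih hx.2)) hE

end Ultrametric

section Apery

variable {K : Type*} [Field K] [CharZero K]

theorem choose_sq_mul_choose_add_eq_prod {n k : ℕ} (hk : k ≤ n) :
    (n.choose k : K) ^ 2 * (n + k).choose k = ((2 * k).choose k : K) ^ 3 / 64 ^ k *
      ∏ m ∈ Icc 1 k,
        (1 - (2 * n + 1 : K) / (2 * m - 1)) * (1 - ((2 * n + 1 : K) / (2 * m - 1)) ^ 2) := by
  induction k with
  | zero => simp
  | succ k ih =>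
    have h2k : (2 * k + 1 : K) ≠ 0 := by exact_mod_cast (2 * k).succ_ne_zero
    have hk1 : (k + 1 : K) ≠ 0 := by exact_mod_cast k.succ_ne_zero
    have hc : ((2 * k).choose k : K) ≠ 0 := by exact_mod_cast (Nat.centralBinom_pos k).ne'
    have hn : (n.choose (k + 1) : K) = n.choose k * (n - k) / (k + 1) := by
      rw [eq_div_iff hk1, ← Nat.cast_sub (by omega)]
      exact_mod_cast Nat.choose_succ_right_eq n k
    have hnk : ((n + (k + 1)).choose (k + 1) : K) = (n + k + 1) * (n + k).choose k / (k + 1) := by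
      rw [eq_div_iff hk1]
      exact_mod_cast (Nat.add_one_mul_choose_eq (n + k) k).symm
    have hcb : ((2 * (k + 1)).choose (k + 1) : K)
        = 2 * (2 * k + 1) * (2 * k).choose k / (k + 1) := by
      rw [eq_div_iff hk1]
      have := Nat.succ_mul_centralBinom_succ k
      rw [Nat.centralBinom, Nat.centralBinom, mul_comm] at this
      exact_mod_cast this
    have hfac : (1 - (2 * n + 1 : K) / (2 * ((k + 1 : ℕ) : K) - 1))
        * (1 - ((2 * n + 1 : K) / (2 * ((k + 1 : ℕ) : K) - 1)) ^ 2)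
        = 8 * (n - k) ^ 2 * (n + k + 1) / (2 * k + 1) ^ 3 := by
      rw [show 2 * ((k + 1 : ℕ) : K) - 1 = 2 * k + 1 by push_cast; ring]
      field_simp; ring
    have hprod : ∏ m ∈ Icc 1 k,
        (1 - (2 * n + 1 : K) / (2 * m - 1)) * (1 - ((2 * n + 1 : K) / (2 * m - 1)) ^ 2)
        = 64 ^ k * ((n.choose k : K) ^ 2 * (n + k).choose k) / ((2 * k).choose k) ^ 3 := by
      rw [ih (by omega)]; field_simp
    rw [prod_Icc_succ_top (by omega), hfac, hprod, hn, hnk, hcb]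
    -- otherwise `field_simp` normalises `2 * k + 1` to a form it no longer sees as `≠ 0` by `h2k`
    generalize (2 * k + 1 : K) = t at h2k ⊢
    field_simp
    ring

theorem apery_eq_one_add_sum_prod (n : ℕ) :
    (apery n : K) = 1 + ∑ k ∈ Icc 1 n, ((2 * k).choose k : K) ^ 3 / 64 ^ k *
      ∏ m ∈ Icc 1 k,
        (1 - (2 * n + 1 : K) / (2 * m - 1)) * (1 - ((2 * n + 1 : K) / (2 * m - 1)) ^ 2) := by
  rw [apery, range_eq_Ico, sum_eq_sum_Ico_succ_bot (by omega : 0 < n + 1), zero_add,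
    Ico_add_one_right_eq_Icc]
  push_cast
  refine congrArg₂ _ (by simp) (sum_congr rfl fun k hk => ?_)
  rw [choose_sq_mul_choose_add_eq_prod (mem_Icc.mp hk).2]

end Apery

lemma one_sub_mul_sum_add_eq {K ι : Type*} [Field K] (c : K) (s : Finset ι) (d : ι → K) :
    1 - c * ∑ i ∈ s, 1 / d i + c ^ 2 / 2 * ((∑ i ∈ s, 1 / d i) ^ 2 - 3 * ∑ i ∈ s, 1 / d i ^ 2)
      = 1 - ∑ i ∈ s, c / d i + ((∑ i ∈ s, c / d i) ^ 2 - 3 * ∑ i ∈ s, (c / d i) ^ 2) / 2 := by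
  have h1 : ∑ i ∈ s, c / d i = c * ∑ i ∈ s, 1 / d i := by
    rw [mul_sum]; simp_rw [mul_one_div]
  have h2 : ∑ i ∈ s, (c / d i) ^ 2 = c ^ 2 * ∑ i ∈ s, 1 / d i ^ 2 := by
    rw [mul_sum]; simp_rw [div_pow, mul_one_div]
  rw [h1, h2]
  ring

section Padic

variable {p : ℕ} [Fact p.Prime]

lemma Padic.norm_natCast_eq_one_of_pos_of_lt {a : ℕ} (ha : 0 < a) (hap : a < p) :
    ‖(a : ℚ_[p])‖ = 1 :=
  Padic.norm_natCast_eq_one_iff.mpr <|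
    (Nat.Prime.coprime_iff_not_dvd Fact.out).mpr (Nat.not_dvd_of_pos_of_lt ha hap)

lemma Padic.norm_two_of_ne_two (hp2 : p ≠ 2) : ‖(2 : ℚ_[p])‖ = 1 := by
  exact_mod_cast norm_natCast_eq_one_iff.mpr ((Nat.coprime_primes Fact.out Nat.prime_two).mpr hp2)

lemma Padic.norm_p_div_two_mul_sub_one {i : ℕ} (hi : 1 ≤ i) (hip : 2 * i ≤ p) :
    ‖(p : ℚ_[p]) / (2 * i - 1)‖ = (p : ℝ)⁻¹ := by
  have hcast : (2 * i - 1 : ℚ_[p]) = (2 * i - 1 : ℕ) := by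
    push_cast [Nat.cast_sub (by omega : 1 ≤ 2 * i)]; ring
  rw [norm_div, norm_p, hcast, norm_natCast_eq_one_of_pos_of_lt (by omega) (by omega), div_one]

lemma Padic.norm_centralBinom_cube_div_le_one (hp2 : p ≠ 2) (k : ℕ) :
    ‖((2 * k).choose k : ℚ_[p]) ^ 3 / 64 ^ k‖ ≤ 1 := by
  rw [norm_div, norm_pow, norm_pow, show (64 : ℚ_[p]) = 2 ^ 6 by norm_num, norm_pow,
    norm_two_of_ne_two hp2]
  simpa using pow_le_one₀ (norm_nonneg _) (IsUltrametricDist.norm_natCast_le_one ℚ_[p] _)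

lemma Rat.not_dvd_den_of_norm_le_one {q : ℚ} (h : ‖(q : ℚ_[p])‖ ≤ 1) : ¬ p ∣ q.den := by
  have hunit := PadicInt.isUnit_den q h
  rw [PadicInt.isUnit_iff, PadicInt.norm_natCast_eq_one_iff] at hunit
  exact (Nat.Prime.coprime_iff_not_dvd Fact.out).mp hunit

lemma pcong_of_norm_sub_le {r : ℕ} {a b : ℚ} (h : ‖(a : ℚ_[p]) - b‖ ≤ (p : ℝ)⁻¹ ^ r) :
    pcong p r a b := by
  have hp0 : (p : ℚ) ≠ 0 := Nat.cast_ne_zero.mpr (Fact.out : p.Prime).ne_zero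
  have hpos : (0 : ℝ) < (p : ℝ)⁻¹ ^ r := by have := (Fact.out : p.Prime).pos; positivity
  refine ⟨(a - b) / p ^ r, by field_simp, Rat.not_dvd_den_of_norm_le_one ?_⟩
  push_cast
  rw [norm_div, norm_pow, Padic.norm_p]
  exact (div_le_one hpos).mpr h

end Padic

theorem apery_half_expansion (p : ℕ) (hp : p.Prime) (hodd : Odd p) :
    pcong p 3 (apery ((p - 1) / 2))
      (1 + ∑ k ∈ Finset.Icc 1 ((p - 1) / 2),
        (((2 * k).choose k : ℚ) ^ 3 / 64 ^ k)
          * (1 - (p : ℚ) * ∑ i ∈ Finset.Icc 1 k, (1 : ℚ) / (2 * i - 1)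
              + (p : ℚ) ^ 2 / 2
                * ((∑ i ∈ Finset.Icc 1 k, (1 : ℚ) / (2 * i - 1)) ^ 2
                    - 3 * ∑ i ∈ Finset.Icc 1 k, (1 : ℚ) / (2 * i - 1) ^ 2))) := by
  have := Fact.mk hp
  obtain ⟨n, hpn⟩ := hodd
  have hp2 : p ≠ 2 := by omega
  have hp1 : (1 : ℝ) ≤ p := by exact_mod_cast hp.one_lt.le
  have hpn' : (2 * n + 1 : ℚ_[p]) = p := by exact_mod_cast congrArg (Nat.cast : ℕ → ℚ_[p]) hpn.symm
  rw [show (p - 1) / 2 = n by omega]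
  apply pcong_of_norm_sub_le
  push_cast
  rw [apery_eq_one_add_sum_prod, hpn', add_sub_add_left_eq_sub, ← sum_sub_distrib]
  simp only [one_sub_mul_sum_add_eq, ← mul_sub]
  refine IsUltrametricDist.norm_sum_le_of_forall_le_of_nonneg (by positivity) fun k hk => ?_
  have hx : ∀ i ∈ Icc 1 k, ‖(p : ℚ_[p]) / (2 * i - 1)‖ ≤ (p : ℝ)⁻¹ := fun i hi => by
    have hik := (mem_Icc.mp hi).2
    have hkn := (mem_Icc.mp hk).2
    exact (Padic.norm_p_div_two_mul_sub_one (mem_Icc.mp hi).1 (by omega)).le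
  simpa using norm_mul_le_of_le (Padic.norm_centralBinom_cube_div_le_one hp2 k)
    (norm_prod_one_sub_mul_one_sub_sq_sub_le (Icc 1 k) _ (by positivity)
      (inv_le_one_of_one_le₀ hp1) (Padic.norm_two_of_ne_two hp2) hx)
end

section
/- For every odd positive integer n, ∑_{k=0}^n binomial(n,k)·binomial(n+k,k)·(binomial(2k,k)/(-4)^k)·D_k = 0, where D_k is the sequence of rational numbers defined below. -/
open Finset Polynomial

theorem sum_neg_one_pow_mul_choose_mul_choose_add (d N r : ℕ) :
    ∑ m ∈ range (d + 1), (-1 : ℤ) ^ (d - m) * d.choose m * (N + m).choose (d + r)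
      = N.choose r := by
  have h := congrFun (fwdDiff_iter_choose r d) N
  rw [fwdDiff_iter_eq_sum_shift] at h
  simpa [smul_eq_mul] using h

theorem sum_neg_one_pow_mul_choose_mul_choose_add_mul_choose (n j : ℕ) :
    ∑ k ∈ range (n + 1), (-1 : ℤ) ^ k * n.choose k * (n + k).choose k * k.choose j
      = (-1) ^ n * n.choose j * (n + j).choose j := by
  rcases lt_or_ge n j with hnj | hjn
  · rw [Nat.choose_eq_zero_of_lt hnj, Nat.cast_zero, mul_zero, zero_mul]
    refine sum_eq_zero fun k hk => ?_
    rw [Nat.choose_eq_zero_of_lt (show k < j by grind), Nat.cast_zero, mul_zero]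
  obtain ⟨d, rfl⟩ := Nat.exists_eq_add_of_le hjn
  have hsign (m : ℕ) (hm : m ≤ d) : (-1 : ℤ) ^ (j + m) = (-1) ^ (j + d) * (-1) ^ (d - m) := by
    rw [← pow_add, show j + d + (d - m) = j + m + 2 * (d - m) by omega, pow_add _ (j + m), pow_mul]
    simp
  rw [show j + d + 1 = j + (d + 1) by omega, sum_range_add, sum_eq_zero fun k hk => by
    rw [Nat.choose_eq_zero_of_lt (mem_range.mp hk), Nat.cast_zero, mul_zero], zero_add]
  calc ∑ m ∈ range (d + 1), (-1 : ℤ) ^ (j + m) * (j + d).choose (j + m)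
          * (j + d + (j + m)).choose (j + m) * (j + m).choose j
      = ∑ m ∈ range (d + 1), (-1) ^ (j + d) * ((j + d).choose j : ℤ)
          * ((-1) ^ (d - m) * d.choose m * (2 * j + d + m).choose (d + j)) := by
        refine sum_congr rfl fun m hm => ?_
        have hm : m ≤ d := Nat.lt_succ_iff.mp (mem_range.mp hm)
        have hmul : ((j + d).choose (j + m) : ℤ) * (j + m).choose j
            = (j + d).choose j * d.choose m := by
          have := Nat.choose_mul (n := j + d) (k := j + m) (s := j) (by omega)
          rw [show j + d - j = d by omega, show j + m - j = m by omega] at this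
          exact_mod_cast this
        rw [hsign m hm, show j + d + (j + m) = 2 * j + d + m by omega,
          ← Nat.choose_symm_of_eq_add (show 2 * j + d + m = (j + m) + (d + j) by omega)]
        linear_combination ((-1) ^ (j + d) * (-1) ^ (d - m) * ((2 * j + d + m).choose (j + m) : ℤ))
          * hmul
    _ = (-1) ^ (j + d) * ((j + d).choose j : ℤ) * (j + d + j).choose j := by
        rw [← mul_sum, sum_neg_one_pow_mul_choose_mul_choose_add d (2 * j + d) j,
          show 2 * j + d = j + d + j by omega]

section BinomialRing

variable {R : Type*} [CommRing R] [BinomialRing R]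

theorem Ring.choose_neg_sub_one (u : R) (k : ℕ) :
    Ring.choose (-1 - u) k = (-1) ^ k * Ring.choose (u + k) k := by
  rw [show -1 - u = -(1 + u) by ring, Ring.choose_neg, show 1 + u + k - 1 = u + k by ring,
    Units.smul_def, Int.negOnePow_def]
  simp

theorem Ring.choose_add_natCast_self (u : R) (k : ℕ) :
    Ring.choose (u + k) k = ∑ j ∈ range (k + 1), (k.choose j : R) * Ring.choose u j := by
  rw [Ring.add_choose_eq k (Commute.all _ _), Nat.sum_antidiagonal_eq_sum_range_succ_mk]
  refine sum_congr rfl fun j hj => ?_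
  rw [Ring.choose_natCast, Nat.choose_symm (by grind), mul_comm]

theorem Ring.succ_mul_choose_succ (r : R) (k : ℕ) :
    (k + 1) * Ring.choose r (k + 1) = Ring.choose r k * (r - k) := by
  have h := Ring.choose_smul_choose r (Nat.le_add_right k 1)
  rwa [Nat.choose_succ_self_right, Nat.add_sub_cancel_left, Ring.choose_one_right, nsmul_eq_mul,
    Nat.cast_succ] at h

def chooseLegendre (n : ℕ) (u : R) : R :=
  ∑ k ∈ range (n + 1), (n.choose k : R) * (n + k).choose k * Ring.choose u k

theorem chooseLegendre_neg_sub_one (n : ℕ) (u : R) :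
    chooseLegendre n (-1 - u) = (-1) ^ n * chooseLegendre n u := by
  have hexpand (k : ℕ) (hk : k ∈ range (n + 1)) : Ring.choose (-1 - u) k
      = (-1) ^ k * ∑ j ∈ range (n + 1), (k.choose j : R) * Ring.choose u j := by
    rw [Ring.choose_neg_sub_one, Ring.choose_add_natCast_self]
    congr 1
    refine sum_subset (range_subset_range.mpr (mem_range.mp hk)) fun j _ hj => ?_
    rw [Nat.choose_eq_zero_of_lt (by simpa using hj), Nat.cast_zero, zero_mul]
  have hcoeff (j : ℕ) := congrArg (Int.cast : ℤ → R)
    (sum_neg_one_pow_mul_choose_mul_choose_add_mul_choose n j)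
  push_cast at hcoeff
  calc chooseLegendre n (-1 - u)
      = ∑ k ∈ range (n + 1), ∑ j ∈ range (n + 1),
          (-1) ^ k * (n.choose k : R) * (n + k).choose k * k.choose j * Ring.choose u j := by
        refine sum_congr rfl fun k hk => ?_
        rw [hexpand k hk, mul_sum, mul_sum]
        exact sum_congr rfl fun j _ => by ring
    _ = ∑ j ∈ range (n + 1), (-1) ^ n * (n.choose j : R) * (n + j).choose j * Ring.choose u j := by
        rw [sum_comm]
        simp_rw [← sum_mul, hcoeff]
    _ = (-1) ^ n * chooseLegendre n u := by
        rw [chooseLegendre, mul_sum]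
        exact sum_congr rfl fun j _ => by ring

end BinomialRing

section Polynomial

variable {R : Type*} [CommRing R]

theorem Polynomial.coeff_one_sub_C_mul_X_mul_succ (a : R) (p : R[X]) (n : ℕ) :
    ((1 - C a * X) * p).coeff (n + 1) = p.coeff (n + 1) - a * p.coeff n := by
  rw [sub_mul, one_mul, mul_assoc, coeff_sub, coeff_C_mul, coeff_X_mul]

theorem Polynomial.coeff_one_prod_one_sub_C_mul_X {ι : Type*} (s : Finset ι) (a : ι → R) :
    (∏ i ∈ s, (1 - C (a i) * X)).coeff 1 = -∑ i ∈ s, a i := by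
  classical
  induction s using Finset.induction_on with
  | empty => simp [coeff_one]
  | insert j s hj ih =>
    rw [prod_insert hj, sum_insert hj, coeff_one_sub_C_mul_X_mul_succ, ih, coeff_zero_eq_eval_zero,
      eval_prod]
    simp only [eval_sub, eval_one, eval_mul, eval_C, eval_X, mul_zero, sub_zero, prod_const_one]
    ring

theorem Polynomial.two_mul_coeff_two_prod_one_sub_C_mul_X {ι : Type*} (s : Finset ι) (a : ι → R) :
    2 * (∏ i ∈ s, (1 - C (a i) * X)).coeff 2 = (∑ i ∈ s, a i) ^ 2 - ∑ i ∈ s, a i ^ 2 := by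
  classical
  induction s using Finset.induction_on with
  | empty => simp [coeff_one]
  | insert j s hj ih =>
    rw [prod_insert hj, sum_insert hj, sum_insert hj, coeff_one_sub_C_mul_X_mul_succ,
      coeff_one_prod_one_sub_C_mul_X]
    linear_combination ih

theorem Polynomial.coeff_eq_zero_of_eval_neg [IsDomain R] [CharZero R] {p : R[X]}
    (hp : ∀ x, p.eval (-x) = -p.eval x) {k : ℕ} (hk : Even k) : p.coeff k = 0 := by
  have hcomp : p.comp (C (-1) * X) = -p := Polynomial.funext fun x => by simp [hp]
  have h := congrArg (coeff · k) hcomp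
  simp only [comp_C_mul_X_coeff, hk.neg_one_pow, mul_one, coeff_neg] at h
  exact self_eq_neg.mp h

end Polynomial

noncomputable def halfBinomPoly (k : ℕ) : ℚ[X] :=
  ∏ i ∈ Icc 1 k, (1 - C (2 / (2 * (i : ℚ) - 1)) * X)

theorem halfBinomPoly_succ (k : ℕ) :
    halfBinomPoly (k + 1) = halfBinomPoly k * (1 - C (2 / (2 * (k : ℚ) + 1)) * X) := by
  rw [halfBinomPoly, prod_Icc_succ_top (Nat.le_add_left 1 k), halfBinomPoly]
  congr 4
  push_cast
  ring

theorem Ring.choose_sub_half_eq_eval_halfBinomPoly (ε : ℚ) (k : ℕ) :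
    Ring.choose (ε - 1 / 2) k = (2 * k).choose k / (-4) ^ k * (halfBinomPoly k).eval ε := by
  induction k with
  | zero => simp [halfBinomPoly]
  | succ k ih =>
    have hcentral : ((k : ℚ) + 1) * (2 * (k + 1)).choose (k + 1)
        = 2 * (2 * k + 1) * (2 * k).choose k := by
      exact_mod_cast Nat.succ_mul_centralBinom_succ k
    have hfactor : 2 * (2 * k + 1) * (1 - 2 / (2 * k + 1) * ε) = 2 * (2 * k + 1) - 4 * ε := by
      field_simp
      ring
    apply mul_left_cancel₀ (show (k : ℚ) + 1 ≠ 0 by positivity)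
    rw [Ring.succ_mul_choose_succ, ih, halfBinomPoly_succ]
    simp only [eval_mul, eval_sub, eval_one, eval_C, eval_X]
    linear_combination (-((halfBinomPoly k).eval ε * (1 - 2 / (2 * k + 1) * ε)) / (-4) ^ (k + 1))
        * hcentral - ((2 * k).choose k * (halfBinomPoly k).eval ε / (-4) ^ (k + 1)) * hfactor

theorem coeff_two_halfBinomPoly (k : ℕ) : (halfBinomPoly k).coeff 2 = 2 * D k := by
  have h := two_mul_coeff_two_prod_one_sub_C_mul_X (Icc 1 k) fun i : ℕ => 2 / (2 * (i : ℚ) - 1)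
  have hsum : ∑ i ∈ Icc 1 k, 2 / (2 * (i : ℚ) - 1) = 2 * ∑ i ∈ Icc 1 k, 1 / (2 * (i : ℚ) - 1) := by
    rw [mul_sum]
    exact sum_congr rfl fun i _ => by ring
  have hsq : ∑ i ∈ Icc 1 k, (2 / (2 * (i : ℚ) - 1)) ^ 2
      = 4 * ∑ i ∈ Icc 1 k, 1 / (2 * (i : ℚ) - 1) ^ 2 := by
    rw [mul_sum]
    exact sum_congr rfl fun i _ => by rw [div_pow]; ring
  rw [← halfBinomPoly, hsum, hsq] at h
  rw [D]
  linear_combination h / 2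

theorem odd_sum_D_vanishes (n : ℕ) (hn : Odd n) :
    ∑ k ∈ Finset.range (n + 1),
        (n.choose k : ℚ) * ((n + k).choose k : ℚ)
          * (((2 * k).choose k : ℚ) / (-4 : ℚ) ^ k) * D k = 0 := by
  set E : ℚ[X] := ∑ k ∈ range (n + 1), C ((n.choose k : ℚ) * ((n + k).choose k : ℚ)
    * (((2 * k).choose k : ℚ) / (-4 : ℚ) ^ k)) * halfBinomPoly k
  have hE (ε : ℚ) : E.eval ε = chooseLegendre n (ε - 1 / 2) := by
    simp only [E, eval_finsetSum, eval_mul, eval_C, chooseLegendre,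
      Ring.choose_sub_half_eq_eval_halfBinomPoly, mul_assoc]
  have hodd (ε : ℚ) : E.eval (-ε) = -E.eval ε := by
    rw [hE, hE, show -ε - 1 / 2 = -1 - (ε - 1 / 2) by ring, chooseLegendre_neg_sub_one,
      hn.neg_one_pow, neg_one_mul]
  have hcoeff := coeff_eq_zero_of_eval_neg hodd even_two
  simp only [E, finsetSum_coeff, coeff_C_mul, coeff_two_halfBinomPoly] at hcoeff
  rw [← mul_left_cancel_iff_of_pos two_pos, mul_zero, ← hcoeff, mul_sum]
  exact sum_congr rfl fun k _ => by ring
end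

section
/- Let p be an odd prime. Then for every integer k with 1 ≤ k ≤ (p-1)/2, binomial((p-1)/2 + k, 2k) ≡ binomial(2k,k)/(-16)^k (mod p²). -/
private lemma aux1N (k m : ℕ) (h : k ≤ m) :
    (m + k).descFactorial (2 * k) = ∏ i ∈ Finset.range k, ((m + 1 + i) * (m - i)) := by
  induction k with
  | zero => simp
  | succ k ih =>
    have hk : k ≤ m := Nat.le_of_succ_le h
    have h1 : m + (k + 1) = (m + k) + 1 := by omega
    have h2 : 2 * (k + 1) = (2 * k + 1) + 1 := by omega
    rw [h1, h2, Nat.succ_descFactorial_succ, Nat.descFactorial_succ, ih hk,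
      Finset.prod_range_succ]
    have h3 : m + k - 2 * k = m - k := by omega
    rw [h3]
    ring

private lemma aux2 (k : ℕ) :
    (∏ i ∈ Finset.range k, (2 * (i : ℚ) + 1)) * 2 ^ k * Nat.factorial k = (Nat.factorial (2 * k) : ℚ) := by
  induction k with
  | zero => simp
  | succ k ih =>
    have h2 : 2 * (k + 1) = (2 * k + 1) + 1 := by omega
    rw [h2, Nat.factorial_succ, Nat.factorial_succ, Finset.prod_range_succ,
      Nat.factorial_succ]
    push_cast
    rw [← ih]
    ring

private lemma aux3 (x : ℤ) (a : ℕ → ℤ) (k : ℕ) :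
    x ∣ (∏ i ∈ Finset.range k, (x - a i) - ∏ i ∈ Finset.range k, (- a i)) := by
  induction k with
  | zero => simp
  | succ k ih =>
    obtain ⟨q, hq⟩ := ih
    rw [Finset.prod_range_succ, Finset.prod_range_succ]
    refine ⟨q * (x - a k) + ∏ i ∈ Finset.range k, (- a i), ?_⟩
    have : ∏ i ∈ Finset.range k, (x - a i) = ∏ i ∈ Finset.range k, (- a i) + x * q := by
      linarith [hq]
    rw [this]; ring

theorem choose_half_add_cong (p : ℕ) (hp : p.Prime) (hodd : Odd p)
    (k : ℕ) (hk1 : 1 ≤ k) (hk2 : k ≤ (p - 1) / 2) :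
    pcong p 2 ((((p - 1) / 2 + k).choose (2 * k) : ℚ))
      (((2 * k).choose k : ℚ) / (-16 : ℚ) ^ k) := by
  obtain ⟨m, hm⟩ := hodd
  have hm2 : (p - 1) / 2 = m := by omega
  rw [hm2] at hk2 ⊢
  have hpQ : (p : ℚ) = 2 * m + 1 := by exact_mod_cast congrArg (Nat.cast (R := ℚ)) hm
  have hfacne : (Nat.factorial (2 * k) : ℚ) ≠ 0 := by exact_mod_cast (Nat.factorial_pos _).ne'
  -- step 1: choose as a product
  have ha : (((m + k).choose (2 * k)) : ℚ)
      = (∏ i ∈ Finset.range k, ((p : ℚ) ^ 2 - (2 * i + 1) ^ 2)) / (4 ^ k * Nat.factorial (2 * k)) := by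
    have h1 : (((m + k).descFactorial (2 * k)) : ℚ)
        = ∏ i ∈ Finset.range k, (((m : ℚ) + 1 + i) * ((m : ℚ) - i)) := by
      rw [aux1N k m hk2]
      push_cast [Nat.cast_sub]
      refine Finset.prod_congr rfl fun i hi => ?_
      have : i ≤ m := le_trans (le_of_lt (Finset.mem_range.mp hi)) hk2
      push_cast [Nat.cast_sub this]
      ring
    have h2 : ∀ i ∈ Finset.range k, ((m : ℚ) + 1 + i) * ((m : ℚ) - i)
        = ((p : ℚ) ^ 2 - (2 * i + 1) ^ 2) / 4 := by
      intro i _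
      rw [hpQ]; ring
    have h3 : (((m + k).descFactorial (2 * k)) : ℚ)
        = (∏ i ∈ Finset.range k, ((p : ℚ) ^ 2 - (2 * i + 1) ^ 2)) / 4 ^ k := by
      rw [h1, Finset.prod_congr rfl h2, Finset.prod_div_distrib, Finset.prod_const,
        Finset.card_range]
    have h4 : (((m + k).descFactorial (2 * k)) : ℚ) = Nat.factorial (2 * k) * ((m + k).choose (2 * k)) := by
      exact_mod_cast congrArg (Nat.cast (R := ℚ)) (Nat.descFactorial_eq_factorial_mul_choose (m + k) (2 * k))
    rw [h4] at h3
    field_simp at h3 ⊢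
    linarith [h3]
  -- step 2: target as a product
  have hb : (((2 * k).choose k : ℚ) / (-16 : ℚ) ^ k)
      = (∏ i ∈ Finset.range k, (-((2 * (i : ℚ) + 1) ^ 2))) / (4 ^ k * Nat.factorial (2 * k)) := by
    have h5 : ∏ i ∈ Finset.range k, (-((2 * (i : ℚ) + 1) ^ 2))
        = (-1) ^ k * (∏ i ∈ Finset.range k, (2 * (i : ℚ) + 1)) ^ 2 := by
      have hneg : ∀ i ∈ Finset.range k, -((2 * (i : ℚ) + 1) ^ 2) = (-1) * (2 * (i : ℚ) + 1) ^ 2 :=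
        fun i _ => by ring
      rw [Finset.prod_congr rfl hneg, Finset.prod_mul_distrib, Finset.prod_const, Finset.card_range, Finset.prod_pow]
    have h6n : (2 * k).choose k * Nat.factorial k * Nat.factorial k = Nat.factorial (2 * k) := by
      have := Nat.choose_mul_factorial_mul_factorial (show k ≤ 2 * k by omega)
      simpa [show 2 * k - k = k by omega] using this
    have h6 : ((2 * k).choose k : ℚ) * Nat.factorial k * Nat.factorial k
        = (Nat.factorial (2 * k) : ℚ) := by exact_mod_cast congrArg (Nat.cast (R := ℚ)) h6n
    have hkne : (Nat.factorial k : ℚ) ≠ 0 := by exact_mod_cast (Nat.factorial_pos _).ne'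
    have h7 := aux2 k
    have h16 : ((-16 : ℚ)) ^ k = (-1) ^ k * 16 ^ k := by rw [← mul_pow]; norm_num
    have hsq : ((-1 : ℚ)) ^ k * (-1) ^ k = 1 := by
      rw [← pow_add]; exact Even.neg_one_pow ⟨k, rfl⟩
    have h4 : ((4 : ℚ)) ^ k = 2 ^ k * 2 ^ k := by rw [← mul_pow]; norm_num
    have h16' : ((16 : ℚ)) ^ k = 4 ^ k * 4 ^ k := by rw [← mul_pow]; norm_num
    have hne2 : ((-1 : ℚ)) ^ k * 16 ^ k ≠ 0 := by
      apply mul_ne_zero <;> [skip; positivity]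
      exact pow_ne_zero _ (by norm_num)
    have hne3 : ((4 : ℚ)) ^ k * Nat.factorial (2 * k) ≠ 0 :=
      mul_ne_zero (by positivity) hfacne
    rw [h5, h16, div_eq_div_iff hne2 hne3]
    set P := ∏ i ∈ Finset.range k, (2 * (i : ℚ) + 1) with hP
    set F2 := (Nat.factorial (2 * k) : ℚ)
    set f := (Nat.factorial k : ℚ)
    refine mul_right_cancel₀ (pow_ne_zero 2 hkne) ?_
    calc ((2 * k).choose k : ℚ) * (4 ^ k * F2) * f ^ 2
        = (((2 * k).choose k : ℚ) * f * f) * 4 ^ k * F2 := by ring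
      _ = F2 * 4 ^ k * F2 := by rw [h6]
      _ = (P * 2 ^ k * f) * (P * 2 ^ k * f) * 4 ^ k := by rw [h7]; ring
      _ = P ^ 2 * (2 ^ k * 2 ^ k) * f ^ 2 * 4 ^ k := by ring
      _ = P ^ 2 * 4 ^ k * f ^ 2 * 4 ^ k := by rw [← h4]
      _ = P ^ 2 * (4 ^ k * 4 ^ k) * f ^ 2 := by ring
      _ = P ^ 2 * 16 ^ k * f ^ 2 := by rw [← h16']
      _ = (-1) ^ k * P ^ 2 * ((-1) ^ k * 16 ^ k) * f ^ 2 := by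
          linear_combination (-(P ^ 2 * 16 ^ k * f ^ 2)) * hsq
  -- step 3: assemble
  obtain ⟨q, hq⟩ := aux3 ((p : ℤ) ^ 2) (fun i => (2 * (i : ℤ) + 1) ^ 2) k
  have hqQ : (∏ i ∈ Finset.range k, ((p : ℚ) ^ 2 - (2 * i + 1) ^ 2))
      - (∏ i ∈ Finset.range k, (-((2 * (i : ℚ) + 1) ^ 2))) = (p : ℚ) ^ 2 * (q : ℚ) := by
    have := congrArg (fun z : ℤ => (z : ℚ)) hq
    push_cast at this
    convert this using 3
  refine ⟨(q : ℚ) / (4 ^ k * Nat.factorial (2 * k)), ?_, ?_⟩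
  · rw [ha, hb, div_sub_div_same, hqQ, mul_div_assoc]
  · -- the denominator is coprime to p
    set M : ℕ := 4 ^ k * Nat.factorial (2 * k) with hM
    have hden : ((q : ℚ) / (4 ^ k * Nat.factorial (2 * k))).den ∣ M := by
      have hMQ : ((4 : ℚ) ^ k * Nat.factorial (2 * k)) = ((M : ℤ) : ℚ) := by
        push_cast [hM]; ring
      rw [hMQ, ← Rat.divInt_eq_div]
      exact_mod_cast Rat.den_dvd q (M : ℤ)
    intro hpd
    have hpM : p ∣ M := hpd.trans hden
    rcases (Nat.Prime.dvd_mul hp).mp hpM with h | h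
    · have h2 : p ∣ 4 := hp.dvd_of_dvd_pow h
      have : p ≤ 4 := Nat.le_of_dvd (by norm_num) h2
      interval_cases p <;> omega
    · have := (Nat.Prime.dvd_factorial hp).mp h
      omega
end

section
/- For every nonnegative integer n, t_n = (2n+1)!·∑_{k=0}^n binomial(2k,k)/(4^k·(2(n-k)+1)), where (t_n) is the sequence defined below. -/
/-!
Both sides satisfy `u (n + 1) = 4 (n + 1)² u n + ((2n+1)‼)²` with `u 0 = 1`. For `t` this is
because the defining recurrence rearranges to
`t (n+2) - 4 (n+2)² t (n+1) = (2n+3)² (t (n+1) - 4 (n+1)² t n)`.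
For the sum, put `c k = C(2k, k) / 4^k` and `S n = ∑_{i+j=n} c i / (2j+1)`. The relation
`(2k+2) c (k+1) = (2k+1) c k` turns `(2n+3) S (n+1) - (2n+2) S n` into
`1 - ∑_{k ≤ n} (c k - c (k+1)) = c (n+1)`, and `(2n+2)! c (n+1) = ((2n+1)‼)²`.
-/

/-- The sequence `t_0 = 1`, `t_1 = 5`,
`t_{n+1} = (8n²+12n+5) t_n - 4n²(2n+1)² t_{n-1}` for `n ≥ 1`. -/
def t : ℕ → ℤ
  | 0 => 1
  | 1 => 5
  | (n + 2) => (8 * ((n : ℤ) + 1) ^ 2 + 12 * ((n : ℤ) + 1) + 5) * t (n + 1)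
      - 4 * ((n : ℤ) + 1) ^ 2 * (2 * ((n : ℤ) + 1) + 1) ^ 2 * t n

open Finset Nat

noncomputable def scaledCentralBinom (k : ℕ) : ℚ := k.centralBinom / 4 ^ k

lemma scaledCentralBinom_zero : scaledCentralBinom 0 = 1 := by
  simp [scaledCentralBinom]

lemma scaledCentralBinom_succ_mul (k : ℕ) :
    scaledCentralBinom (k + 1) * (2 * k + 2) = (2 * k + 1) * scaledCentralBinom k := by
  have h : ((k : ℚ) + 1) * (k + 1).centralBinom = 2 * (2 * k + 1) * k.centralBinom := by
    exact_mod_cast succ_mul_centralBinom_succ k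
  simp only [scaledCentralBinom, pow_succ]
  field_simp
  linear_combination 2 * h

lemma sum_range_scaledCentralBinom_div (n : ℕ) :
    ∑ k ∈ range n, scaledCentralBinom k / (2 * k + 2) = 1 - scaledCentralBinom n := by
  rw [← scaledCentralBinom_zero, ← sum_range_sub']
  refine sum_congr rfl fun k _ => ?_
  have := scaledCentralBinom_succ_mul k
  field_simp
  linear_combination this

lemma factorial_mul_scaledCentralBinom_succ (n : ℕ) :
    ((2 * n + 2)! : ℚ) * scaledCentralBinom (n + 1) = ((2 * n + 1)‼ : ℚ) ^ 2 := by
  induction n with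
  | zero => norm_num [scaledCentralBinom, centralBinom_eq_two_mul_choose]
  | succ n ih =>
    have h := scaledCentralBinom_succ_mul (n + 1)
    rw [show 2 * (n + 1) + 2 = 2 * n + 2 + 1 + 1 by ring, factorial_succ, factorial_succ,
      show 2 * (n + 1) + 1 = 2 * n + 1 + 2 by ring, doubleFactorial_add_two]
    push_cast at h ⊢
    linear_combination ((2 * n + 3) * (2 * n + 2)! : ℚ) * h + (2 * (n : ℚ) + 3) ^ 2 * ih

noncomputable def scaledCentralBinomConv (n : ℕ) : ℚ :=
  ∑ p ∈ antidiagonal n, scaledCentralBinom p.1 / (2 * p.2 + 1)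

lemma scaledCentralBinomConv_succ (n : ℕ) :
    (2 * n + 3) * scaledCentralBinomConv (n + 1)
      = (2 * n + 2) * scaledCentralBinomConv n + scaledCentralBinom (n + 1) := by
  have hterm : ∀ p ∈ antidiagonal n,
      (2 * n + 3) * (scaledCentralBinom (p.1 + 1) / (2 * p.2 + 1))
        = (2 * n + 2) * (scaledCentralBinom p.1 / (2 * p.2 + 1))
          - scaledCentralBinom p.1 / (2 * p.1 + 2) := by
    rintro ⟨i, j⟩ hij
    obtain rfl := HasAntidiagonal.mem_antidiagonal.mp hij
    have := scaledCentralBinom_succ_mul i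
    push_cast
    field_simp
    linear_combination (2 * (i : ℚ) + 2 * j + 3) * this
  have htel : ∑ p ∈ antidiagonal n, scaledCentralBinom p.1 / (2 * p.1 + 2)
      = 1 - scaledCentralBinom (n + 1) := by
    rw [sum_antidiagonal_eq_sum_range_succ_mk]
    exact sum_range_scaledCentralBinom_div (n + 1)
  rw [scaledCentralBinomConv, sum_antidiagonal_succ, mul_add, mul_sum, sum_congr rfl hterm,
    sum_sub_distrib, ← mul_sum, htel, scaledCentralBinomConv, scaledCentralBinom_zero]
  field_simp
  push_cast
  ring

lemma t_succ (n : ℕ) : t (n + 1) = 4 * ((n : ℤ) + 1) ^ 2 * t n + ((2 * n + 1)‼ : ℤ) ^ 2 := by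
  induction n with
  | zero => rfl
  | succ n ih =>
    rw [t, ih, show 2 * (n + 1) + 1 = 2 * n + 1 + 2 by ring, doubleFactorial_add_two]
    push_cast
    ring

lemma t_eq_factorial_mul_scaledCentralBinomConv (n : ℕ) :
    (t n : ℚ) = (2 * n + 1)! * scaledCentralBinomConv n := by
  induction n with
  | zero => simp [t, scaledCentralBinomConv, scaledCentralBinom_zero]
  | succ n ih =>
    have hfac : ((2 * n + 2)! : ℚ) = (2 * n + 2) * (2 * n + 1)! := by
      rw [factorial_succ]
      push_cast
      ring
    have hfac_succ : ((2 * (n + 1) + 1)! : ℚ) = (2 * n + 3) * (2 * n + 2)! := by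
      rw [show 2 * (n + 1) + 1 = 2 * n + 2 + 1 by ring, factorial_succ]
      push_cast
      ring
    rw [t_succ, hfac_succ]
    push_cast
    rw [ih]
    linear_combination -((2 * n + 2)! : ℚ) * scaledCentralBinomConv_succ n
      - factorial_mul_scaledCentralBinom_succ n
      - (2 * (n : ℚ) + 2) * scaledCentralBinomConv n * hfac

theorem t_eq_factorial_sum (n : ℕ) :
    (t n : ℚ) = (Nat.factorial (2 * n + 1) : ℚ)
      * ∑ k ∈ Finset.range (n + 1),
          ((2 * k).choose k : ℚ) / (4 ^ k * ((2 * (n - k) + 1 : ℕ) : ℚ)) := by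
  rw [t_eq_factorial_mul_scaledCentralBinomConv, scaledCentralBinomConv,
    Nat.sum_antidiagonal_eq_sum_range_succ_mk]
  simp [scaledCentralBinom, centralBinom_eq_two_mul_choose, div_div]
end

section
/- Let p be an odd prime. Then t_p ≡ (1 + 4·(-1)^{(p-1)/2})·p² (mod p³), where (t_n) is the sequence defined below. -/
open Nat Finset

section
variable (p : ℕ) [Fact p.Prime]

lemma fact_ne_zmod {k : ℕ} (hk : k < p) : ((k ! : ℕ) : ZMod p) ≠ 0 := by
  rw [Ne, ZMod.natCast_eq_zero_iff]
  intro h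
  exact absurd ((Nat.Prime.dvd_factorial (Fact.out)).mp h) (by omega)

lemma cast_ne_zmod {k : ℕ} (hk0 : 0 < k) (hk : k < p) : ((k : ℕ) : ZMod p) ≠ 0 := by
  rw [Ne, ZMod.natCast_eq_zero_iff]
  intro h
  exact absurd (Nat.le_of_dvd hk0 h) (by omega)

end

-- k! * ∏_{j ∈ Ioc k n} j = n!
lemma fact_prod_Ioc {k n : ℕ} (hk : k ≤ n) : k ! * ∏ j ∈ Ioc k n, j = n ! := by
  have h1 : ∀ a : ℕ, (∏ j ∈ Ioc 0 a, j) = a ! := by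
    intro a
    rw [← Finset.prod_Ico_id_eq_factorial a]
    congr 1
  rw [← h1 n, ← h1 k, Finset.prod_Ioc_consecutive _ (Nat.zero_le k) hk]

-- (2k-1)‼ * (2^k * k!) = (2k)!
lemma dfac_fact : ∀ k : ℕ, (2 * k - 1)‼ * (2 ^ k * k !) = (2 * k)!
  | 0 => rfl
  | (k + 1) => by
    have h1 : 2 * (k + 1) - 1 = 2 * k + 1 := by omega
    have h2 : 2 * (k + 1) = (2 * k + 1) + 1 := by omega
    rw [h1, ← Nat.doubleFactorial_two_mul, h2, Nat.factorial_eq_mul_doubleFactorial (2 * k + 1)]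
    rw [show 2 * k + 1 + 1 = 2 * (k + 1) by omega]
    ring

-- C(p-1, k) ≡ (-1)^k
lemma choose_pred_cast (p : ℕ) [Fact p.Prime] :
    ∀ k, k ≤ p - 1 → (((p - 1).choose k : ℕ) : ZMod p) = (-1) ^ k := by
  intro k
  induction k with
  | zero => intro _; simp
  | succ k ih =>
    intro hk1
    have hp1 : 1 ≤ p := (Fact.out : p.Prime).pos
    have hk : k ≤ p - 1 := by omega
    have hN := Nat.choose_succ_right_eq (p - 1) k
    have hcast := congrArg (Nat.cast : ℕ → ZMod p) hN
    push_cast at hcast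
    rw [ih hk] at hcast
    have hsub : (((p - 1 - k : ℕ)) : ZMod p) = -1 - (k : ZMod p) := by
      have : ((p - 1 - k : ℕ) : ZMod p) = ((p : ℕ) : ZMod p) - 1 - k := by
        push_cast [Nat.cast_sub (by omega : 1 + k ≤ p), show p - 1 - k = p - (1 + k) by omega]
        ring
      rw [this, ZMod.natCast_self]; ring
    rw [hsub] at hcast
    have hne : ((k : ZMod p) + 1) ≠ 0 := by
      have := cast_ne_zmod p (k := k + 1) (by omega) (by omega)
      push_cast at this; exact this
    apply mul_right_cancel₀ hne
    rw [hcast]; ring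

-- Nat identity for central binomials
lemma central_succ (k : ℕ) :
    (2 * (k + 1)).choose (k + 1) * ((k + 1) * (k + 1))
      = (2 * k).choose k * ((2 * k + 1) * (2 * k + 2)) := by
  apply Nat.eq_of_mul_eq_mul_right (Nat.mul_pos k.factorial_pos k.factorial_pos :
    0 < k ! * k !)
  have e1 : (2 * k).choose k * k ! * k ! = (2 * k)! :=
    by have := Nat.choose_mul_factorial_mul_factorial (show k ≤ 2 * k by omega)
       rwa [show 2 * k - k = k by omega] at this
  have e2 : (2 * (k + 1)).choose (k + 1) * (k + 1)! * (k + 1)! = (2 * (k + 1))! :=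
    by have := Nat.choose_mul_factorial_mul_factorial (show k + 1 ≤ 2 * (k + 1) by omega)
       rwa [show 2 * (k + 1) - (k + 1) = k + 1 by omega] at this
  have e3 : (2 * (k + 1))! = (2 * k)! * ((2 * k + 1) * (2 * k + 2)) := by
    rw [show 2 * (k + 1) = (2 * k + 1) + 1 by omega, Nat.factorial_succ,
      Nat.factorial_succ]
    ring
  calc (2 * (k + 1)).choose (k + 1) * ((k + 1) * (k + 1)) * (k ! * k !)
      = (2 * (k + 1)).choose (k + 1) * (k + 1)! * (k + 1)! := by
        rw [Nat.factorial_succ]; ring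
    _ = (2 * k)! * ((2 * k + 1) * (2 * k + 2)) := by rw [e2, e3]
    _ = (2 * k).choose k * k ! * k ! * ((2 * k + 1) * (2 * k + 2)) := by rw [e1]
    _ = (2 * k).choose k * ((2 * k + 1) * (2 * k + 2)) * (k ! * k !) := by ring

-- C(2k,k) ≡ (-4)^k C(m,k) mod p, for k ≤ m, p = 2m+1
lemma central_half (p m : ℕ) [Fact p.Prime] (hm : p = 2 * m + 1) :
    ∀ k, k ≤ m → (((2 * k).choose k : ℕ) : ZMod p) = (-4) ^ k * ((m.choose k : ℕ) : ZMod p) := by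
  have hp0 : ((p : ℕ) : ZMod p) = 0 := ZMod.natCast_self p
  have hm2 : (2 : ZMod p) * (m : ZMod p) + 1 = 0 := by
    have h : ((2 * m + 1 : ℕ) : ZMod p) = 0 := by rw [← hm]; exact hp0
    push_cast at h
    linear_combination h
  intro k
  induction k with
  | zero => intro _; simp
  | succ k ih =>
    intro hk1
    have hk : k ≤ m := by omega
    have h1 := congrArg (Nat.cast : ℕ → ZMod p) (central_succ k)
    push_cast at h1
    rw [ih hk] at h1
    have h2 := congrArg (Nat.cast : ℕ → ZMod p) (Nat.choose_succ_right_eq m k)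
    rw [Nat.cast_mul, Nat.cast_mul, Nat.cast_sub (by omega : k ≤ m)] at h2
    push_cast at h2
    have hne : ((k : ZMod p) + 1) ≠ 0 := by
      have := cast_ne_zmod p (k := k + 1) (by omega) (by omega)
      push_cast at this; exact this
    apply mul_right_cancel₀ (mul_ne_zero hne hne)
    linear_combination h1 + (4 * ((k : ZMod p) + 1) * (-4) ^ k) * h2
      + (2 * ((k : ZMod p) + 1) * (-4) ^ k * ((m.choose k : ℕ) : ZMod p)) * hm2

-- Vandermonde sum of squares
lemma sum_choose_sq (m : ℕ) :
    ∑ k ∈ range (2 * m + 1), (m.choose k) ^ 2 = (2 * m).choose m := by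
  have h1 : (2 * m).choose m = ∑ k ∈ range (m + 1), m.choose k * m.choose (m - k) := by
    rw [two_mul, Nat.add_choose_eq, Finset.Nat.sum_antidiagonal_eq_sum_range_succ_mk]
  have h2 : ∀ k ∈ range (m + 1), m.choose k * m.choose (m - k) = (m.choose k) ^ 2 := by
    intro k hk
    rw [Finset.mem_range] at hk
    rw [Nat.choose_symm (by omega), sq]
  rw [h1, Finset.sum_congr rfl h2]
  symm
  apply Finset.sum_subset
  · intro x hx; rw [Finset.mem_range] at *; omega
  · intro x _ hx
    rw [Finset.mem_range, not_lt] at hx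
    rw [Nat.choose_eq_zero_of_lt (by omega), pow_two, mul_zero]

lemma term_eq (p m k : ℕ) [Fact p.Prime] (hm : p = 2 * m + 1) (hk : k < p) :
    (((2 * k - 1)‼ : ℕ) : ZMod p) ^ 2 * ∏ j ∈ Ioc k (p - 1), (4 * (j : ZMod p) ^ 2)
      = ((m.choose k : ℕ) : ZMod p) ^ 2 := by
  have hp : p.Prime := Fact.out
  have hp3 : 3 ≤ p := by have := hp.two_le; omega
  have h2ne : (2 : ZMod p) ≠ 0 := by
    have : ((2 : ℕ) : ZMod p) ≠ 0 := cast_ne_zmod p (by norm_num) (by omega)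
    simpa using this
  have h4ne : (4 : ZMod p) ≠ 0 := by
    have : ((4 : ZMod p)) = 2 * 2 := by norm_num
    rw [this]; exact mul_ne_zero h2ne h2ne
  set D : ZMod p := (((2 * k - 1)‼ : ℕ) : ZMod p) with hDdef
  set F : ZMod p := ((k ! : ℕ) : ZMod p) with hFdef
  set A : ZMod p := ∏ j ∈ Ioc k (p - 1), (j : ZMod p) with hAdef
  set Cc : ZMod p := (((2 * k).choose k : ℕ) : ZMod p) with hCcdef
  set Cm : ZMod p := ((m.choose k : ℕ) : ZMod p) with hCmdef
  have hFne : F ≠ 0 := fact_ne_zmod p hk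
  -- product split
  have hprod : (∏ j ∈ Ioc k (p - 1), (4 * (j : ZMod p) ^ 2))
      = (4 : ZMod p) ^ (p - 1 - k) * A ^ 2 := by
    rw [Finset.prod_mul_distrib, Finset.prod_const, Nat.card_Ioc, Finset.prod_pow]
  -- F * A = -1
  have hFA : F * A = -1 := by
    have hN := fact_prod_Ioc (show k ≤ p - 1 by omega)
    have := congrArg (Nat.cast : ℕ → ZMod p) hN
    push_cast at this
    rw [hFdef, hAdef]
    rw [this]
    exact ZMod.wilsons_lemma p
  -- D * 2^k * F = Cc * F * F
  have hD : D * 2 ^ k * F = Cc * F * F := by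
    have hN1 := dfac_fact k
    have hN2 : (2 * k).choose k * k ! * k ! = (2 * k)! := by
      have := Nat.choose_mul_factorial_mul_factorial (show k ≤ 2 * k by omega)
      rwa [show 2 * k - k = k by omega] at this
    have := congrArg (Nat.cast : ℕ → ZMod p) (hN1.trans hN2.symm)
    push_cast at this
    rw [hDdef, hFdef, hCcdef]
    push_cast
    linear_combination this
  -- Cc = (-4)^k * Cm
  have hCc : Cc = (-4) ^ k * Cm := by
    rcases le_or_gt k m with h | h
    · exact central_half p m hm k h
    · have hz1 : (2 * k).choose k ≡ 0 [MOD p] := by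
        have : p ∣ (2 * k).choose k :=
          Nat.Prime.dvd_choose hp hk (by omega) (by omega)
        exact (Nat.modEq_zero_iff_dvd).mpr this
      have hz2 : m.choose k = 0 := Nat.choose_eq_zero_of_lt h
      rw [hCcdef, hCmdef, hz2]
      rw [(ZMod.natCast_eq_zero_iff _ _).mpr (Nat.modEq_zero_iff_dvd.mp hz1)]
      simp
  have hB4 : (4 : ZMod p) ^ (p - 1 - k) * 4 ^ k = 4 ^ (p - 1) :=
    pow_sub_mul_pow (4 : ZMod p) (by omega : k ≤ p - 1)
  have hF4 : (4 : ZMod p) ^ (p - 1) = 1 := ZMod.pow_card_sub_one_eq_one h4ne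
  have h16sq : ((-4 : ZMod p)) ^ k * (-4) ^ k = (16 : ZMod p) ^ k := by
    rw [← mul_pow]; norm_num
  have h44 : ((4 : ZMod p)) ^ k * 4 ^ k = (16 : ZMod p) ^ k := by
    rw [← mul_pow]; norm_num
  have h2sq : ((2 : ZMod p)) ^ k * 2 ^ k = (4 : ZMod p) ^ k := by
    rw [← mul_pow]; norm_num
  rw [hprod]
  have hu : (F * F * F * F * ((2 : ZMod p) ^ k * 2 ^ k) * (4 : ZMod p) ^ k) ≠ 0 := by
    apply mul_ne_zero
    apply mul_ne_zero
    · exact mul_ne_zero (mul_ne_zero (mul_ne_zero hFne hFne) hFne) hFne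
    · exact mul_ne_zero (pow_ne_zero _ h2ne) (pow_ne_zero _ h2ne)
    · exact pow_ne_zero _ h4ne
  apply mul_left_cancel₀ hu
  calc F * F * F * F * ((2 : ZMod p) ^ k * 2 ^ k) * (4 : ZMod p) ^ k
        * (D ^ 2 * ((4 : ZMod p) ^ (p - 1 - k) * A ^ 2))
      = (D * 2 ^ k * F) * (D * 2 ^ k * F) * ((F * A) * (F * A))
          * ((4 : ZMod p) ^ (p - 1 - k) * 4 ^ k) := by ring
    _ = ((Cc * F * F) * (Cc * F * F)) * ((-1) * (-1)) * ((4 : ZMod p) ^ (p - 1)) := by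
        rw [hD, hFA, hB4]
    _ = (Cc * Cc) * (F * F * F * F) := by rw [hF4]; ring
    _ = (((-4) ^ k * Cm) * ((-4) ^ k * Cm)) * (F * F * F * F) := by rw [hCc]
    _ = ((-4 : ZMod p) ^ k * (-4) ^ k) * (Cm * Cm) * (F * F * F * F) := by ring
    _ = (16 : ZMod p) ^ k * (Cm * Cm) * (F * F * F * F) := by rw [h16sq]
    _ = F * F * F * F * ((2 : ZMod p) ^ k * 2 ^ k) * (4 : ZMod p) ^ k * Cm ^ 2 := by
        rw [← h44, ← h2sq]; ring


lemma central_two (p : ℕ) (hp : p.Prime) :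
    (((2 * p).choose p : ℕ) : ZMod p) = 2 := by
  haveI : Fact p.Prime := ⟨hp⟩
  have h := Choose.choose_modEq_choose_mod_mul_choose_div (n := 2 * p) (k := p) (p := p)
  have h0 : (2 * p) % p = 0 := Nat.mul_mod_left 2 p
  have h1 : p % p = 0 := Nat.mod_self p
  have h2 : (2 * p) / p = 2 := by rw [mul_comm]; exact Nat.mul_div_cancel_left 2 hp.pos
  have h3 : p / p = 1 := Nat.div_self hp.pos
  rw [h0, h1, h2, h3] at h
  rw [← ZMod.intCast_eq_intCast_iff] at h
  simpa using h

lemma part_d (p : ℕ) (hp : p.Prime) (hodd : Odd p) :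
    ((p : ℤ))^3 ∣ ((2 * p - 1)‼ : ℤ)^2 - (p : ℤ)^2 := by
  haveI : Fact p.Prime := ⟨hp⟩
  have hp1 : 1 ≤ p := hp.pos
  have hN : (2 * p - 1)‼ * 2 ^ p = (2 * p).choose p * p ! := by
    have e1 : (2 * p)! = (2 * p)‼ * (2 * p - 1)‼ := by
      have := Nat.factorial_eq_mul_doubleFactorial (2 * p - 1)
      rwa [Nat.sub_add_cancel (by omega)] at this
    have e2 : (2 * p)‼ = 2 ^ p * p ! := Nat.doubleFactorial_two_mul p
    have e3 : (2 * p).choose p * p ! * p ! = (2 * p)! := by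
      have := Nat.choose_mul_factorial_mul_factorial
        (Nat.le_mul_of_pos_left p (by norm_num) : p ≤ 2 * p)
      rwa [show 2 * p - p = p by omega] at this
    have e4 : (2 * p - 1)‼ * 2 ^ p * p ! = (2 * p)! := by rw [e1, e2]; ring
    exact Nat.mul_right_cancel (Nat.factorial_pos p) (e4.trans e3.symm)
  have hf : (p ! : ℤ) = (p : ℤ) * ((p - 1)! : ℤ) := by
    calc (p ! : ℤ) = (((p - 1) + 1)! : ℤ) := by rw [Nat.sub_add_cancel hp1]
      _ = (p : ℤ) * ((p - 1)! : ℤ) := by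
          rw [Nat.factorial_succ]; push_cast [Nat.sub_add_cancel hp1]; ring
  have hZ : ((2 * p - 1)‼ : ℤ) * 2 ^ p
      = ((2 * p).choose p : ℤ) * ((p : ℤ) * ((p-1)! : ℤ)) := by
    have := congrArg (Nat.cast : ℕ → ℤ) hN
    push_cast at this
    rw [hf] at this
    linarith [this]
  have h4pow : (4:ℤ)^p = 2^p * 2^p := by rw [show (4:ℤ) = 2*2 by norm_num, mul_pow]
  have hmodp : (p : ℤ) ∣ ((2 * p).choose p : ℤ)^2 * ((p-1)! : ℤ)^2 - 4 ^ p := by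
    apply (ZMod.intCast_zmod_eq_zero_iff_dvd _ p).mp
    push_cast
    rw [central_two p hp, ZMod.wilsons_lemma (p := p), ZMod.pow_card (4 : ZMod p)]
    ring
  obtain ⟨c, hc⟩ := hmodp
  have h2 : ((2 * p - 1)‼ : ℤ)^2 * 4 ^ p
      = ((2 * p).choose p : ℤ)^2 * (p : ℤ)^2 * ((p-1)! : ℤ)^2 := by
    linear_combination (((2 * p - 1)‼ : ℤ) * 2 ^ p
      + ((2 * p).choose p : ℤ) * ((p : ℤ) * ((p-1)! : ℤ))) * hZ
      + ((2 * p - 1)‼ : ℤ)^2 * h4pow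
  have key : (4:ℤ) ^ p * (((2 * p - 1)‼ : ℤ)^2 - (p:ℤ)^2) = (p:ℤ)^3 * c := by
    linear_combination h2 + (p:ℤ)^2 * hc
  have hcop : IsCoprime ((p:ℤ)^3) ((4:ℤ) ^ p) := by
    apply IsCoprime.pow
    have hp2 : p ≠ 2 := by rintro rfl; simp [Nat.odd_iff] at hodd
    have h2' : Nat.Coprime p 2 := (Nat.Prime.coprime_iff_not_dvd hp).mpr
      (fun h => hp2 ((Nat.prime_dvd_prime_iff_eq hp Nat.prime_two).mp h))
    have h4' : Nat.Coprime p 4 := by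
      have := h2'.mul_right h2'; simpa using this
    have := Nat.isCoprime_iff_coprime.mpr h4'
    exact_mod_cast this
  exact hcop.dvd_of_dvd_mul_left ⟨c, by linarith [key]⟩

lemma t_step : ∀ n : ℕ, t (n + 1) = (2 * (n : ℤ) + 2) ^ 2 * t n + ((2 * n + 1)‼ : ℤ) ^ 2
  | 0 => by simp [t, Nat.doubleFactorial]
  | (n + 1) => by
    have IH := t_step n
    have hd : ((2 * (n + 1) + 1)‼ : ℤ) = (2 * (n : ℤ) + 3) * ((2 * n + 1)‼ : ℤ) := by
      have : 2 * (n + 1) + 1 = (2 * n + 1) + 2 := by ring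
      rw [this, Nat.doubleFactorial_add_two]
      push_cast; ring
    show (8 * ((n : ℤ) + 1) ^ 2 + 12 * ((n : ℤ) + 1) + 5) * t (n + 1)
      - 4 * ((n : ℤ) + 1) ^ 2 * (2 * ((n : ℤ) + 1) + 1) ^ 2 * t n = _
    rw [hd]
    push_cast
    linear_combination (2 * (n:ℤ) + 3)^2 * IH

lemma t_closed : ∀ n : ℕ, t n = ∑ k ∈ range (n + 1),
    ((2 * k - 1)‼ : ℤ) ^ 2 * ∏ j ∈ Ioc k n, (4 * (j : ℤ) ^ 2)
  | 0 => by simp [t]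
  | (n + 1) => by
    rw [t_step n, t_closed n]
    conv_rhs => rw [Finset.sum_range_succ]
    rw [Finset.mul_sum]
    congr 1
    · apply Finset.sum_congr rfl
      intro k hk
      rw [Finset.mem_range] at hk
      rw [Finset.prod_Ioc_succ_top (by omega : k ≤ n)]
      push_cast
      ring
    · have : 2 * (n + 1) - 1 = 2 * n + 1 := by omega
      simp [this]

lemma part_c (p m : ℕ) [Fact p.Prime] (hm : p = 2 * m + 1) :
    ((t (p - 1) : ℤ) : ZMod p) = (-1) ^ m := by
  have hclosed := t_closed (p - 1)
  have hp1 : p - 1 + 1 = p := by omega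
  rw [hp1] at hclosed
  rw [hclosed]
  push_cast
  have hterm : ∀ k ∈ range p,
      (((2 * k - 1)‼ : ℕ) : ZMod p) ^ 2 * ∏ j ∈ Ioc k (p - 1), (4 * (j : ZMod p) ^ 2)
        = ((m.choose k : ℕ) : ZMod p) ^ 2 := by
    intro k hk
    rw [Finset.mem_range] at hk
    exact term_eq p m k hm hk
  rw [Finset.sum_congr rfl hterm]
  have : (∑ k ∈ range p, ((m.choose k : ℕ) : ZMod p) ^ 2)
      = ((∑ k ∈ range p, (m.choose k) ^ 2 : ℕ) : ZMod p) := by push_cast; ring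
  have hsum : (∑ k ∈ range p, (m.choose k) ^ 2) = (p - 1).choose m := by
    rw [hm, sum_choose_sq m]
    congr 1
  rw [this, hsum, choose_pred_cast p m (by omega)]

theorem t_p_cong (p : ℕ) (hp : p.Prime) (hodd : Odd p) :
    t p ≡ (1 + 4 * (-1 : ℤ) ^ ((p - 1) / 2)) * (p : ℤ) ^ 2 [ZMOD ((p : ℤ) ^ 3)] := by
  haveI : Fact p.Prime := ⟨hp⟩
  have hp1 : 1 ≤ p := hp.pos
  have hm' : p % 2 = 1 := Nat.odd_iff.mp hodd
  set m := (p - 1) / 2 with hmdef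
  have hm : p = 2 * m + 1 := by omega
  have hstep := t_step (p - 1)
  rw [show p - 1 + 1 = p by omega, show 2 * (p - 1) + 1 = 2 * p - 1 by omega,
    Nat.cast_sub hp1] at hstep
  have hc : (p : ℤ) ∣ t (p - 1) - (-1) ^ m := by
    apply (ZMod.intCast_zmod_eq_zero_iff_dvd _ p).mp
    push_cast
    rw [part_c p m hm]
    ring
  have hd := part_d p hp hodd
  obtain ⟨a, ha⟩ := hc
  obtain ⟨b, hb⟩ := hd
  rw [Int.modEq_iff_dvd]
  exact ⟨-b - 4 * a, by linear_combination (-1 : ℤ) * hstep - hb - 4 * (p : ℤ) ^ 2 * ha⟩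
end
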